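/- Under the hypotheses of the previous setting (H, K₁, K₂ all solutions of (f^i−f^j)∂_i∂_j F = ∂_j F ∂_i g^i − ∂_i F ∂_j g^j, with ∂_i H ≠ 0, f^i ≠ f^j for i ≠ j), the diagonal hydrodynamic systems u^i_t = v^i_H(K₁) u^i_x and u^i_τ = v^i_H(K₂) u^i_x, where v^i_H(K) = −∂_i K / ∂_i H, satisfy the commutativity condition ∂_j v^i_H(K₁)/(v^i_H(K₁) − v^j_H(K₁)) = ∂_j v^i_H(K₂)/(v^i_H(K₂) − v^j_H(K₂)) for all i ≠ j (wherever the denominators are nonzero). -/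

import Mathlib

/-- Partial derivative `∂_i F` at `u`. -/
noncomputable def pd {n : ℕ} (i : Fin n) (F : (Fin n → ℝ) → ℝ) (u : Fin n → ℝ) : ℝ :=
  fderiv ℝ F u (Pi.single i 1)

lemma contDiff_pd {n : ℕ} (i : Fin n) {F : (Fin n → ℝ) → ℝ} (hF : ContDiff ℝ (⊤ : ℕ∞) F) :
    ContDiff ℝ (⊤ : ℕ∞) (pd i F) :=
  ((hF.fderiv_right (m := (⊤ : ℕ∞)) (by simp)).clm_apply contDiff_const)

lemma aux_ratio {n : ℕ} (U : Set (Fin n → ℝ)) (hU : IsOpen U) (i j : Fin n)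
    (H K : (Fin n → ℝ) → ℝ) (hH : ContDiff ℝ (⊤ : ℕ∞) H) (hK : ContDiff ℝ (⊤ : ℕ∞) K)
    (hHne : ∀ x ∈ U, ∀ k, pd k H x ≠ 0)
    (u : Fin n → ℝ) (hu : u ∈ U)
    (Gi Gj Fd : ℝ) (hFd : Fd ≠ 0)
    (hHe : Fd * pd j (pd i H) u = pd i H u * Gj - pd j H u * Gi)
    (hKe : Fd * pd j (pd i K) u = pd i K u * Gj - pd j K u * Gi)
    (v : (Fin n → ℝ) → ℝ) (hv : ∀ x, v x = -(pd i K x) / pd i H x)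
    (hvne : v u ≠ -(pd j K u) / pd j H u) :
    pd j v u / (v u - -(pd j K u) / pd j H u) = Gi * pd j H u / (pd i H u * Fd) := by
  have hA : pd i H u ≠ 0 := hHne u hu i
  have hB : pd j H u ≠ 0 := hHne u hu j
  have hKd : Differentiable ℝ (pd i K) := (contDiff_pd i hK).differentiable (by simp)
  have hHd : Differentiable ℝ (pd i H) := (contDiff_pd i hH).differentiable (by simp)
  have hvd : DifferentiableAt ℝ v u := by
    have : v = fun x => -(pd i K x) / pd i H x := funext hv
    rw [this]
    simp only [div_eq_mul_inv]
    exact ((hKd u).neg).mul ((hHd u).inv hA)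
  -- eventual equality v * pd i H = -(pd i K) near u
  have heq : (fun x => v x * pd i H x) =ᶠ[nhds u] (fun x => -(pd i K x)) := by
    filter_upwards [hU.mem_nhds hu] with x hx
    rw [hv x, div_mul_cancel₀ _ (hHne x hx i)]
  have hfd := heq.fderiv_eq (𝕜 := ℝ)
  rw [fderiv_fun_mul hvd (hHd u), fderiv_fun_neg] at hfd
  have hN : pd j v u * pd i H u + v u * pd j (pd i H) u = -(pd j (pd i K) u) := by
    have := congrArg (fun L : (Fin n → ℝ) →L[ℝ] ℝ => L (Pi.single j 1)) hfd
    simpa [pd, add_comm, mul_comm] using this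
  -- explicit formulas
  have hDK : pd j (pd i K) u = (pd i K u * Gj - pd j K u * Gi) / Fd := by
    rw [eq_div_iff hFd, mul_comm]; exact hKe
  have hDH : pd j (pd i H) u = (pd i H u * Gj - pd j H u * Gi) / Fd := by
    rw [eq_div_iff hFd, mul_comm]; exact hHe
  have hvu : v u = -(pd i K u) / pd i H u := hv u
  have hNval : pd j v u = (-(pd j (pd i K) u) - v u * pd j (pd i H) u) / pd i H u := by
    rw [eq_div_iff hA]; linarith [hN]
  have hS : v u - -(pd j K u) / pd j H u ≠ 0 := sub_ne_zero.mpr hvne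
  rw [div_eq_div_iff hS (mul_ne_zero hA hFd), hNval, hDK, hDH, hvu]
  field_simp
  ring

/-- For `H, K₁, K₂` solutions of the cohomological equation, the diagonal systems with
characteristic velocities `v^i_H(K₁) = −∂_i K₁/∂_i H` and `v^i_H(K₂) = −∂_i K₂/∂_i H`
satisfy the commutativity condition
`∂_j v^i_H(K₁)/(v^i_H(K₁) − v^j_H(K₁)) = ∂_j v^i_H(K₂)/(v^i_H(K₂) − v^j_H(K₂))`. -/
theorem stmt2 {n : ℕ} (U : Set (Fin n → ℝ)) (hU : IsOpen U)
    (f g : Fin n → ℝ → ℝ) (hf : ∀ i, ContDiff ℝ (⊤ : ℕ∞) (f i)) (hg : ∀ i, ContDiff ℝ (⊤ : ℕ∞) (g i))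
    (hfd : ∀ i j : Fin n, i ≠ j → ∀ u ∈ U, f i (u i) ≠ f j (u j))
    (H K₁ K₂ : (Fin n → ℝ) → ℝ)
    (hH : ContDiff ℝ (⊤ : ℕ∞) H) (hK₁ : ContDiff ℝ (⊤ : ℕ∞) K₁) (hK₂ : ContDiff ℝ (⊤ : ℕ∞) K₂)
    (hHne : ∀ u ∈ U, ∀ i, pd i H u ≠ 0)
    (hHeq : ∀ i j : Fin n, i ≠ j → ∀ u ∈ U,
      (f i (u i) - f j (u j)) * pd i (pd j H) u
        = pd j H u * deriv (g i) (u i) - pd i H u * deriv (g j) (u j))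
    (hK₁eq : ∀ i j : Fin n, i ≠ j → ∀ u ∈ U,
      (f i (u i) - f j (u j)) * pd i (pd j K₁) u
        = pd j K₁ u * deriv (g i) (u i) - pd i K₁ u * deriv (g j) (u j))
    (hK₂eq : ∀ i j : Fin n, i ≠ j → ∀ u ∈ U,
      (f i (u i) - f j (u j)) * pd i (pd j K₂) u
        = pd j K₂ u * deriv (g i) (u i) - pd i K₂ u * deriv (g j) (u j))
    (v₁ v₂ : Fin n → (Fin n → ℝ) → ℝ)
    (hv₁ : ∀ i u, v₁ i u = -(pd i K₁ u) / pd i H u)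
    (hv₂ : ∀ i u, v₂ i u = -(pd i K₂ u) / pd i H u) :
    ∀ i j : Fin n, i ≠ j → ∀ u ∈ U, v₁ i u ≠ v₁ j u → v₂ i u ≠ v₂ j u →
      pd j (v₁ i) u / (v₁ i u - v₁ j u) = pd j (v₂ i) u / (v₂ i u - v₂ j u) := by
  intro i j hij u hu h1 h2
  have hFd : f j (u j) - f i (u i) ≠ 0 := sub_ne_zero.mpr (hfd j i hij.symm u hu)
  have e1 := aux_ratio U hU i j H K₁ hH hK₁ hHne u hu
    (deriv (g i) (u i)) (deriv (g j) (u j)) _ hFd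
    (hHeq j i hij.symm u hu) (hK₁eq j i hij.symm u hu) (v₁ i) (hv₁ i)
    (by rw [← hv₁ j u]; exact h1)
  have e2 := aux_ratio U hU i j H K₂ hH hK₂ hHne u hu
    (deriv (g i) (u i)) (deriv (g j) (u j)) _ hFd
    (hHeq j i hij.symm u hu) (hK₂eq j i hij.symm u hu) (v₂ i) (hv₂ i)
    (by rw [← hv₂ j u]; exact h2)
  rw [hv₁ j u, e1, hv₂ j u, e2]
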